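/- Let s be a string of length n, let g ≥ 1 and M ≥ 1, and let P be a finite set of positions such that: (i) every p ∈ P satisfies p ≥ g − 1 and p + M + g ≤ n; (ii) for every p ∈ P, the substring s[p..p+M) has no occurrence in s at any position i < p; and (iii) any two distinct elements of P differ by at least g. Then |P| · g ≤ d_{M+g}(s), the number of distinct substrings of s of length M + g. -/

import Mathlib

/-- `numDistinctSubstrings s n K` is the number of distinct substrings of length `K`
of the length-`n` string `s` (each substring of length `K` starting at a position
`h` with `h + K ≤ n` is viewed as a function `Fin K → α`). -/
def numDistinctSubstrings {α : Type*} [DecidableEq α] (s : ℕ → α) (n K : ℕ) : ℕ :=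
  ((Finset.range (n + 1 - K)).image (fun h => fun j : Fin K => s (h + (j : ℕ)))).card

/-!
Send a pair `(p, t)` with `p ∈ P`, `t < g` to the length-`(M + g)` window starting at `p - t`; it
contains `s[p..p+M)` at offset `t`. If the windows of `(p, t)` and `(q, u)` coincide, the copy of
`s[p..p+M)` inside the second window lies at `q - u + t`, and leftmost-ness of `p` forces
`p - t ≤ q - u`; by symmetry both windows start at the same position. The separation of `P`
by `g > t, u` then gives `(p, t) = (q, u)`, so the `|P| · g` pairs yield distinct windows.
-/

namespace Substring

variable {α : Type*}

def window (s : ℕ → α) (K a : ℕ) : Fin K → α := fun j => s (a + j)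

def NoEarlierOccurrence (s : ℕ → α) (M p : ℕ) : Prop :=
  ∀ i < p, ¬ ∀ j < M, s (i + j) = s (p + j)

theorem le_of_window_eq {s : ℕ → α} {K M a b t : ℕ} (hK : t + M ≤ K)
    (h : window s K a = window s K b) (ha : NoEarlierOccurrence s M (a + t)) : a ≤ b := by
  by_contra! hba
  refine ha (b + t) (by omega) fun j hj => ?_
  simpa only [window, add_assoc] using (congrFun h ⟨t + j, by omega⟩).symm

theorem eq_of_window_eq {s : ℕ → α} {K M a b t u : ℕ} (ht : t + M ≤ K) (hu : u + M ≤ K)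
    (h : window s K a = window s K b) (ha : NoEarlierOccurrence s M (a + t))
    (hb : NoEarlierOccurrence s M (b + u)) : a = b :=
  le_antisymm (le_of_window_eq ht h ha) (le_of_window_eq hu h.symm hb)

theorem injOn_window_sub {s : ℕ → α} {g M : ℕ} {P : Finset ℕ} (hlow : ∀ p ∈ P, g - 1 ≤ p)
    (hleft : ∀ p ∈ P, NoEarlierOccurrence s M p)
    (hsep : ∀ p ∈ P, ∀ q ∈ P, p < q → p + g ≤ q) :
    Set.InjOn (fun x : ℕ × ℕ => window s (M + g) (x.1 - x.2)) ↑(P ×ˢ Finset.range g) := by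
  rintro ⟨p, t⟩ hpt ⟨q, u⟩ hqu h
  simp only [Finset.coe_product, Finset.coe_range, Set.mem_prod, Finset.mem_coe,
    Set.mem_Iio] at hpt hqu
  obtain ⟨hp, ht⟩ := hpt
  obtain ⟨hq, hu⟩ := hqu
  have hgp := hlow p hp
  have hgq := hlow q hq
  have hstart : p - t = q - u := by
    refine eq_of_window_eq (K := M + g) (M := M) (t := t) (u := u) (by omega) (by omega) h ?_ ?_
    · simpa [Nat.sub_add_cancel (by omega : t ≤ p)] using hleft p hp
    · simpa [Nat.sub_add_cancel (by omega : u ≤ q)] using hleft q hq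
  have hpq := hsep p hp q hq
  have hqp := hsep q hq p hp
  simp only [Prod.mk.injEq]
  omega

end Substring

open Substring in
theorem stmt13_general {α : Type*} [DecidableEq α] (s : ℕ → α) (n g M : ℕ)
    (P : Finset ℕ)
    (hrange : ∀ p ∈ P, g - 1 ≤ p ∧ p + M + g ≤ n)
    (hleft : ∀ p ∈ P, ∀ i < p, ¬(∀ j < M, s (i + j) = s (p + j)))
    (hsep : ∀ p ∈ P, ∀ q ∈ P, p < q → p + g ≤ q) :
    P.card * g ≤ numDistinctSubstrings s n (M + g) := by
  have hinj := injOn_window_sub (fun p hp => (hrange p hp).1) hleft hsep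
  have hsub : (P ×ˢ Finset.range g).image (fun x => window s (M + g) (x.1 - x.2)) ⊆
      (Finset.range (n + 1 - (M + g))).image (window s (M + g)) := by
    simp only [Finset.image_subset_iff, Finset.mem_product, Finset.mem_range, Prod.forall]
    rintro p t ⟨hp, -⟩
    have := (hrange p hp).2
    exact Finset.mem_image_of_mem _ (Finset.mem_range.mpr (by omega))
  calc P.card * g = (P ×ˢ Finset.range g).card := by rw [Finset.card_product, Finset.card_range]
    _ = ((P ×ˢ Finset.range g).image fun x => window s (M + g) (x.1 - x.2)).card :=
      (Finset.card_image_of_injOn hinj).symm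
    _ ≤ numDistinctSubstrings s n (M + g) := Finset.card_le_card hsub

/-- If `P` is a set of positions, each at least `g - 1` and with `p + M + g ≤ n`, such
that each substring `s[p..p+M)` (for `p ∈ P`) has no occurrence at a smaller position
and any two distinct elements of `P` differ by at least `g`, then
`|P| * g ≤ d_{M+g}(s)`. -/
theorem stmt13 {α : Type*} [DecidableEq α] (s : ℕ → α) (n g M : ℕ)
    (hg : 1 ≤ g) (hM : 1 ≤ M) (P : Finset ℕ)
    (hrange : ∀ p ∈ P, g - 1 ≤ p ∧ p + M + g ≤ n)
    (hleft : ∀ p ∈ P, ∀ i < p, ¬(∀ j < M, s (i + j) = s (p + j)))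
    (hsep : ∀ p ∈ P, ∀ q ∈ P, p < q → p + g ≤ q) :
    P.card * g ≤ numDistinctSubstrings s n (M + g) :=
  stmt13_general s n g M P hrange hleft hsep
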